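/- arXiv:0901.0678 — 2 statements merged into one kernel-verified Lean document; each statement's English description precedes it below -/
import Mathlib

section
/- Let Γ be a countable group with Kazhdan constants (K, ε): for every unitary Γ-representation π with a (K, ε)-almost invariant unit vector there is an invariant unit vector w with ‖v − w‖ < 1/4. Let Γ ↷ (X, μ) be an ergodic probability-measure-preserving action, Λ a countable group, and α, β : Γ × X → Λ measurable cocycles such that μ{x : α(g,x) = β(g,x)} > 1 − ε²/2 for all g ∈ K. Then there exists a measurable map f : X → Λ with β(g,x) = f(gx)⁻¹ α(g,x) f(x) almost everywhere, and moreover μ{x : f(x) = e} > 3/4. -/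
/-!
The cocycles define an action of `Γ` on `X × Λ`, `g • (x, l) = (g • x, α g x * l * (β g x)⁻¹)`,
which preserves `μ × count` and is a genuine action up to null sets; let `π` be its Koopman
representation on `L²(X × Λ)`. The indicator `v` of `X × {1}` satisfies
`‖v - π g v‖² = 2 μ {α g ≠ β g} < ε²` for `g ∈ K`, so the Kazhdan property yields a `π`-invariant
`w` with `‖v - w‖ < 1/4`. Let `f x` be the index at which the fibre `w (x, ·) ∈ ℓ²(Λ)` carries more
than half of its mass; it is unique when it exists. By Markov's inequality the fibre is close to
`δ₁`, hence `f x = 1`, on a set of measure `> 3/4`. Invariance of `w` gives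
`f (g • x) = α g x * f x * (β g x)⁻¹`, so the domain of `f` is invariant up to null sets and has
positive measure, hence is conull by ergodicity.
-/

open MeasureTheory Filter Function
open scoped ENNReal symmDiff

section Dominant

variable {ι E : Type*} [NormedAddCommGroup E]

def IsDominant (u : ι → E) (i : ι) : Prop :=
  ∑' j, ‖u j‖ₑ ^ 2 < 2 * ‖u i‖ₑ ^ 2

theorem IsDominant.eq {u : ι → E} {i j : ι} (hi : IsDominant u i) (hj : IsDominant u j) :
    i = j := by
  classical
  by_contra hne
  have hpair : ‖u i‖ₑ ^ 2 + ‖u j‖ₑ ^ 2 ≤ ∑' k, ‖u k‖ₑ ^ 2 := by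
    simpa [Finset.sum_pair hne] using ENNReal.sum_le_tsum (f := fun k => ‖u k‖ₑ ^ 2) {i, j}
  have := calc
    2 * ∑' k, ‖u k‖ₑ ^ 2 = ∑' k, ‖u k‖ₑ ^ 2 + ∑' k, ‖u k‖ₑ ^ 2 := two_mul _
    _ < 2 * ‖u i‖ₑ ^ 2 + 2 * ‖u j‖ₑ ^ 2 := ENNReal.add_lt_add hi hj
    _ ≤ 2 * ∑' k, ‖u k‖ₑ ^ 2 := by rw [← mul_add]; gcongr
  exact this.false

theorem isDominant_comp_equiv {κ : Type*} (u : ι → E) (e : κ ≃ ι) (k : κ) :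
    IsDominant (u ∘ e) k ↔ IsDominant u (e k) := by
  simp only [IsDominant, Function.comp_apply, e.tsum_eq (fun i => ‖u i‖ₑ ^ 2)]

theorem isDominant_of_tsum_sub_lt {u : ι → E} {i : ι} {c : E} (hc : ‖c‖ₑ = 1)
    (h : ∑' j, ‖({i} : Set ι).indicator (fun _ => c) j - u j‖ₑ ^ 2 < 4⁻¹) : IsDominant u i := by
  classical
  set r := ∑' j, if j = i then 0 else ‖u j‖ₑ ^ 2
  have hsplit :
      ∑' j, ‖({i} : Set ι).indicator (fun _ => c) j - u j‖ₑ ^ 2 = ‖c - u i‖ₑ ^ 2 + r := by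
    rw [ENNReal.tsum_eq_add_tsum_ite i]
    congr 1
    · simp
    · refine tsum_congr fun j => ?_
      split_ifs with hj <;> simp [hj]
  rw [hsplit] at h
  have h4 : (4⁻¹ : ℝ≥0∞) = 2⁻¹ ^ 2 := by
    rw [← ENNReal.inv_pow]; norm_num
  have ha : ‖c - u i‖ₑ < 2⁻¹ := by
    by_contra! ha
    have := calc (2⁻¹ : ℝ≥0∞) ^ 2 ≤ ‖c - u i‖ₑ ^ 2 := by gcongr
      _ ≤ ‖c - u i‖ₑ ^ 2 + r := le_self_add
      _ < 2⁻¹ ^ 2 := h4 ▸ h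
    exact this.false
  have hb : 2⁻¹ < ‖u i‖ₑ := by
    have htri : 1 ≤ ‖c - u i‖ₑ + ‖u i‖ₑ := by
      simpa [hc] using enorm_add_le (c - u i) (u i)
    by_contra! hb
    have := calc (1 : ℝ≥0∞) ≤ ‖c - u i‖ₑ + ‖u i‖ₑ := htri
      _ < 2⁻¹ + 2⁻¹ := ENNReal.add_lt_add_of_lt_of_le (by simp) ha hb
      _ = 1 := ENNReal.inv_two_add_inv_two
    exact this.false
  have hr : r < ‖u i‖ₑ ^ 2 :=
    calc r ≤ ‖c - u i‖ₑ ^ 2 + r := le_add_self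
      _ < 2⁻¹ ^ 2 := h4 ▸ h
      _ < ‖u i‖ₑ ^ 2 := by gcongr
  calc ∑' j, ‖u j‖ₑ ^ 2 = ‖u i‖ₑ ^ 2 + r := ENNReal.tsum_eq_add_tsum_ite i
    _ < ‖u i‖ₑ ^ 2 + ‖u i‖ₑ ^ 2 := ENNReal.add_lt_add_left (by simp) hr
    _ = 2 * ‖u i‖ₑ ^ 2 := (two_mul _).symm

theorem measurableSet_isDominant {X ι E : Type*} [MeasurableSpace X] [Countable ι]
    [NormedAddCommGroup E] [MeasurableSpace E] [OpensMeasurableSpace E] {W : X → ι → E}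
    (hW : ∀ i, Measurable fun x => W x i) (i : ι) : MeasurableSet {x | IsDominant (W x) i} :=
  measurableSet_lt (.tsum fun j => (hW j).enorm.pow_const 2)
    (((hW i).enorm.pow_const 2).const_mul 2)

end Dominant

theorem exists_measurable_eq_of_pairwise_disjoint {X ι : Type*} [MeasurableSpace X]
    [MeasurableSpace ι] [Countable ι] [MeasurableSingletonClass ι] {S : ι → Set X}
    (hS : ∀ i, MeasurableSet (S i)) (hdisj : Pairwise (Disjoint on S)) (i₀ : ι) :
    ∃ f : X → ι, Measurable f ∧ ∀ i, ∀ x ∈ S i, f x = i := by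
  classical
  let f : X → ι := fun x => if h : ∃ i, x ∈ S i then h.choose else i₀
  have hf : ∀ i, ∀ x ∈ S i, f x = i := fun i x hx =>
    have h : ∃ i, x ∈ S i := ⟨i, hx⟩
    (dif_pos h).trans <| hdisj.eq (Set.not_disjoint_iff.mpr ⟨x, h.choose_spec, hx⟩)
  refine ⟨f, measurable_to_countable' fun i => ?_, hf⟩
  have hpre : f ⁻¹' {i} = S i ∪ {_x | i₀ = i} ∩ (⋃ j, S j)ᶜ := by
    ext x
    by_cases hx : ∃ j, x ∈ S j
    · obtain ⟨j, hj⟩ := hx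
      simp only [Set.mem_preimage, Set.mem_singleton_iff, hf j x hj, Set.mem_union,
        Set.mem_inter_iff, Set.mem_compl_iff, Set.mem_iUnion, not_exists]
      exact ⟨fun h => h ▸ Or.inl hj, fun h => h.elim (fun hi => hdisj.eq
        (Set.not_disjoint_iff.mpr ⟨x, hj, hi⟩)) fun h => (h.2 j hj).elim⟩
    · simp_all [f]
  rw [hpre]
  exact (hS i).union ((MeasurableSet.const _).inter (MeasurableSet.iUnion hS).compl)

theorem ae_forall_of_ae_prod_count {X Λ : Type*} [MeasurableSpace X] {μ : Measure X}
    [MeasurableSpace Λ] [MeasurableSingletonClass Λ] [Countable Λ] {p : X × Λ → Prop}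
    (h : ∀ᵐ y ∂μ.prod .count, p y) : ∀ᵐ x ∂μ, ∀ l, p (x, l) :=
  (Measure.ae_ae_of_ae_prod h).mono fun _ hx => Measure.ae_count_iff.mp hx

theorem lintegral_tsum_enorm_sq_eq {X Λ E : Type*} [MeasurableSpace X] {μ : Measure X}
    [SFinite μ] [MeasurableSpace Λ] [MeasurableSingletonClass Λ] [Countable Λ]
    [NormedAddCommGroup E] (F : Lp E 2 (μ.prod (.count : Measure Λ))) {G : X × Λ → E}
    (hG : ⇑F =ᵐ[μ.prod .count] G) :
    ∫⁻ x, ∑' l, ‖G (x, l)‖ₑ ^ 2 ∂μ = ‖F‖ₑ ^ 2 := by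
  have h := eLpNorm_nnreal_pow_eq_lintegral (f := ⇑F) (μ := μ.prod .count) (p := 2) two_ne_zero
  simp only [NNReal.coe_ofNat, ENNReal.rpow_two, ENNReal.coe_ofNat] at h
  rw [Lp.enorm_def, h, lintegral_congr_ae (hG.mono fun y hy => by rw [hy]),
    lintegral_prod _ (((Lp.aestronglyMeasurable F).congr hG).enorm.pow_const 2)]
  simp only [lintegral_count]

theorem one_sub_lt_measure_setOf_lt {X : Type*} [MeasurableSpace X] {μ : Measure X}
    [IsProbabilityMeasure μ] {R : X → ℝ≥0∞} (hR : AEMeasurable R μ) {c : ℝ≥0∞} (hc : c ≠ 0)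
    (hc1 : c ≤ 1) (h : ∫⁻ x, R x ∂μ < c * c) : 1 - c < μ {x | R x < c} := by
  have hlarge : μ {x | c ≤ R x} < c :=
    (ENNReal.mul_lt_mul_iff_right hc (ne_top_of_le_ne_top ENNReal.one_ne_top hc1)).mp
      ((mul_meas_ge_le_lintegral₀ hR c).trans_lt h)
  have hcompl : {x | R x < c} = {x | c ≤ R x}ᶜ := by ext; simp
  rw [hcompl, prob_compl_eq_one_sub₀ (nullMeasurableSet_le aemeasurable_const hR)]
  exact (ENNReal.cancel_of_ne (ENNReal.sub_ne_top ENNReal.one_ne_top)).tsub_lt_tsub_left_of_le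
    hc1 hlarge

theorem three_quarters_lt_measure_isDominant {X ι E : Type*} [MeasurableSpace X]
    {μ : Measure X} [IsProbabilityMeasure μ] [Countable ι] [NormedAddCommGroup E]
    [MeasurableSpace E] [BorelSpace E] {c : E} (hc : ‖c‖ₑ = 1) {W : X → ι → E}
    (hW : ∀ j, Measurable fun x => W x j) (i : ι)
    (hclose : ∫⁻ x, ∑' j, ‖({i} : Set ι).indicator (fun _ => c) j - W x j‖ₑ ^ 2 ∂μ < 16⁻¹) :
    ENNReal.ofReal (3 / 4) < μ {x | IsDominant (W x) i} := by
  have hR : Measurable fun x => ∑' j, ‖({i} : Set ι).indicator (fun _ => c) j - W x j‖ₑ ^ 2 :=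
    .tsum fun j => ((continuous_const.sub continuous_id).measurable.comp (hW j)).enorm.pow_const 2
  have h16 : (16⁻¹ : ℝ≥0∞) = 4⁻¹ * 4⁻¹ := by
    rw [← ENNReal.mul_inv (by simp) (by simp)]; norm_num
  calc ENNReal.ofReal (3 / 4) = 1 - 4⁻¹ := by
        rw [← ENNReal.ofReal_one, ← ENNReal.ofReal_ofNat 4, ← ENNReal.ofReal_inv_of_pos four_pos,
          ← ENNReal.ofReal_sub _ (by norm_num)]
        norm_num
    _ < μ {x | ∑' j, ‖({i} : Set ι).indicator (fun _ => c) j - W x j‖ₑ ^ 2 < 4⁻¹} :=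
        one_sub_lt_measure_setOf_lt hR.aemeasurable (by simp) (by norm_num) (h16 ▸ hclose)
    _ ≤ μ {x | IsDominant (W x) i} := measure_mono fun x hx => isDominant_of_tsum_sub_lt hc hx

theorem MeasureTheory.Measure.map_count_equiv {α β : Type*} [MeasurableSpace α]
    [MeasurableSpace β] [MeasurableSingletonClass α] [MeasurableSingletonClass β] (e : α ≃ β)
    (he : Measurable e) :
    (Measure.count : Measure α).map e = .count := by
  ext s hs
  rw [Measure.map_apply he hs, ← e.symm_symm, ← e.symm.image_eq_preimage_symm,
    Measure.count_injective_image e.symm.injective]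

theorem MeasureTheory.MeasurePreserving.measure_preimage_symmDiff {α : Type*}
    [MeasurableSpace α] {μ : Measure α} {f : α → α} (hf : MeasurePreserving f μ μ) {s : Set α}
    (hs : MeasurableSet s) (hμs : μ s ≠ ∞) : μ (s ∆ (f ⁻¹' s)) = 2 * μ (s \ f ⁻¹' s) := by
  have hpre : μ (f ⁻¹' s) = μ s := hf.measure_preimage hs.nullMeasurableSet
  rw [measure_symmDiff_eq hs.nullMeasurableSet (hs.preimage hf.measurable).nullMeasurableSet,
    ← measure_sdiff_symm (hs.preimage hf.measurable).nullMeasurableSet hs.nullMeasurableSet hpre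
      (measure_ne_top_of_subset Set.inter_subset_right hμs), two_mul]

theorem ErgodicSMul.of_forall_preimage_smul_eq {G α : Type*} [Group G] [Countable G]
    [MulAction G α] [MeasurableSpace α] {μ : Measure α} [IsProbabilityMeasure μ]
    (hmp : ∀ g : G, MeasurePreserving (g • ·) μ μ)
    (herg : ∀ s : Set α, MeasurableSet s → (∀ g : G, (g • ·) ⁻¹' s = s) → μ s = 0 ∨ μ s = 1) :
    ErgodicSMul G α μ where
  measure_preimage_smul g _ hs := (hmp g).measure_preimage hs.nullMeasurableSet
  aeconst_of_forall_preimage_smul_ae_eq {s} hs hinv := by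
    set t := ⋂ g : G, (g • ·) ⁻¹' s
    have ht : MeasurableSet t := .iInter fun g => (hmp g).measurable hs
    have hts : t =ᵐ[μ] s := by
      simpa only [Set.iInter_const] using Filter.EventuallyEq.countable_iInter hinv
    have htinv : ∀ g : G, (g • ·) ⁻¹' t = t := fun g => by
      simp only [t, Set.preimage_iInter, Set.preimage_preimage, smul_smul]
      exact (Equiv.mulRight g).surjective.iInter_comp fun h => (h • ·) ⁻¹' s
    refine (eventuallyConst_set'.mpr ?_).congr hts
    rcases herg t ht htinv with h | h
    · exact Or.inl (ae_eq_empty.mpr h)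
    · exact Or.inr (ae_eq_univ.mpr ((prob_compl_eq_zero_iff ht).mpr h))

theorem ae_mem_of_forall_preimage_smul_ae_eq {G α : Type*} [Group G] [MulAction G α]
    [MeasurableSpace α] {μ : Measure α} [ErgodicSMul G α μ] {s : Set α} (hs : NullMeasurableSet s μ)
    (hinv : ∀ g : G, (g • ·) ⁻¹' s =ᵐ[μ] s) (hpos : μ s ≠ 0) : ∀ᵐ x ∂μ, x ∈ s := by
  rcases eventuallyConst_set'.mp (aeconst_of_forall_preimage_smul_ae_eq G hs hinv) with h | h
  · exact absurd (ae_eq_empty.mp h) hpos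
  · exact h.mono fun x hx => hx.mpr trivial

namespace MeasureTheory.Lp

variable {α β E : Type*} [MeasurableSpace α] [MeasurableSpace β] {μ : Measure α} {μb : Measure β}
  [NormedAddCommGroup E] {p : ℝ≥0∞}

theorem compMeasurePreserving_congr_ae {f f' : α → β} (hf : MeasurePreserving f μ μb)
    (hf' : MeasurePreserving f' μ μb) (h : f =ᵐ[μ] f') (F : Lp E p μb) :
    compMeasurePreserving f hf F = compMeasurePreserving f' hf' F := by
  refine Lp.ext ((coeFn_compMeasurePreserving F hf).trans ?_)
  refine EventuallyEq.trans ?_ (coeFn_compMeasurePreserving F hf').symm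
  filter_upwards [h] with x hx
  simp only [comp_apply, hx]

variable {Γ : Type*} [Group Γ] {T : Γ → α → α}

theorem compMeasurePreserving_comp_of_ae_mul (hT : ∀ g, MeasurePreserving (T g) μ μ)
    (hmul : ∀ g h, T g ∘ T h =ᵐ[μ] T (g * h)) (g h : Γ) (F : Lp E p μ) :
    compMeasurePreserving (T h) (hT h) (compMeasurePreserving (T g) (hT g) F) =
      compMeasurePreserving (T (g * h)) (hT _) F := by
  rw [← compMeasurePreserving_comp_apply]
  exact compMeasurePreserving_congr_ae _ _ (hmul g h) F

theorem compMeasurePreserving_one_of_ae_eq_id (hT : ∀ g, MeasurePreserving (T g) μ μ)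
    (hone : T 1 =ᵐ[μ] id) (F : Lp E p μ) : compMeasurePreserving (T 1) (hT 1) F = F := by
  rw [compMeasurePreserving_congr_ae _ (.id μ) hone, compMeasurePreserving_id_apply]

variable (𝕜 : Type*) [NormedRing 𝕜] [Module 𝕜 E] [IsBoundedSMul 𝕜 E] [Fact (1 ≤ p)]
  (hT : ∀ g, MeasurePreserving (T g) μ μ) (hmul : ∀ g h, T g ∘ T h =ᵐ[μ] T (g * h))
  (hone : T 1 =ᵐ[μ] id)

noncomputable def koopman : Γ →* (Lp E p μ ≃ₗᵢ[𝕜] Lp E p μ) where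
  toFun g := .ofSurjective (compMeasurePreservingₗᵢ 𝕜 (T g⁻¹) (hT _)) fun F =>
    ⟨compMeasurePreserving (T g) (hT g) F,
      (compMeasurePreserving_comp_of_ae_mul hT hmul _ _ F).trans <|
        (compMeasurePreserving_congr_ae _ _ (.of_eq (by rw [mul_inv_cancel])) F).trans
          (compMeasurePreserving_one_of_ae_eq_id hT hone F)⟩
  map_one' := LinearIsometryEquiv.ext fun F =>
    (compMeasurePreserving_congr_ae _ _ (.of_eq (by rw [inv_one])) F).trans
      (compMeasurePreserving_one_of_ae_eq_id hT hone F)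
  map_mul' g h := LinearIsometryEquiv.ext fun F =>
    (compMeasurePreserving_congr_ae _ _ (.of_eq (by rw [mul_inv_rev])) F).trans
      (compMeasurePreserving_comp_of_ae_mul hT hmul _ _ F).symm

theorem koopman_inv_apply (g : Γ) (F : Lp E p μ) :
    koopman 𝕜 hT hmul hone g⁻¹ F = compMeasurePreserving (T g) (hT g) F :=
  compMeasurePreserving_congr_ae _ _ (.of_eq (by rw [inv_inv])) F

theorem comp_ae_eq_of_koopman_eq {F : Lp E p μ} (hF : ∀ g, koopman 𝕜 hT hmul hone g F = F)
    (g : Γ) : ⇑F ∘ T g =ᵐ[μ] F := by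
  have h := hF g⁻¹
  rw [koopman_inv_apply] at h
  exact (coeFn_compMeasurePreserving F (hT g)).symm.trans (by rw [h])

theorem norm_sub_koopman_indicatorConstLp (hp : p ≠ ∞) {s : Set α} (hs : MeasurableSet s)
    (hμs : μ s ≠ ∞) (c : E) (g : Γ) :
    ‖indicatorConstLp p hs hμs c - koopman 𝕜 hT hmul hone g (indicatorConstLp p hs hμs c)‖ =
      ‖c‖ * μ.real (s ∆ (T g ⁻¹' s)) ^ (1 / p.toReal) := by
  set π : Γ →* (Lp E p μ ≃ₗᵢ[𝕜] Lp E p μ) := koopman 𝕜 hT hmul hone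
  have hp0 : p ≠ 0 := (zero_lt_one.trans_le Fact.out).ne'
  have hinv : ∀ F, π g⁻¹ (π g F) = F := fun F => by
    rw [← comp_apply (f := π g⁻¹), ← LinearIsometryEquiv.coe_mul, ← map_mul, inv_mul_cancel,
      map_one, LinearIsometryEquiv.coe_one, id]
  rw [← (π g⁻¹).norm_map, map_sub, hinv, norm_sub_rev, koopman_inv_apply,
    indicatorConstLp_compMeasurePreserving, ← dist_eq_norm_sub, dist_indicatorConstLp_eq_norm,
    norm_indicatorConstLp hp0 hp]

end MeasureTheory.Lp

section SkewProduct

variable {Γ X Λ : Type*} [Group Γ] [MulAction Γ X] [Group Λ]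

def cocycleSkewAction (α β : Γ → X → Λ) (g : Γ) (y : X × Λ) : X × Λ :=
  (g • y.1, α g y.1 * y.2 * (β g y.1)⁻¹)

theorem sdiff_preimage_cocycleSkewAction (α β : Γ → X → Λ) (g : Γ) :
    (Set.univ ×ˢ {1}) \ cocycleSkewAction α β g ⁻¹' (Set.univ ×ˢ {1}) =
      {x | α g x ≠ β g x} ×ˢ {1} := by
  ext ⟨x, l⟩
  by_cases hl : l = 1 <;> simp [cocycleSkewAction, hl, mul_inv_eq_one]

variable [MeasurableSpace X] {μ : Measure X}

def IsCocycle (μ : Measure X) (α : Γ → X → Λ) : Prop :=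
  ∀ g₂ g₁ : Γ, ∀ᵐ x ∂μ, α (g₂ * g₁) x = α g₂ (g₁ • x) * α g₁ x

theorem IsCocycle.ae_one {α : Γ → X → Λ} (hα : IsCocycle μ α) : ∀ᵐ x ∂μ, α 1 x = 1 := by
  filter_upwards [hα 1 1] with x hx
  rwa [one_mul, one_smul, left_eq_mul] at hx

variable [MeasurableSpace Λ]

theorem cocycleSkewAction_comp_ae_eq [SFinite μ] {α β : Γ → X → Λ} (hα : IsCocycle μ α)
    (hβ : IsCocycle μ β) (g h : Γ) :
    cocycleSkewAction α β g ∘ cocycleSkewAction α β h =ᵐ[μ.prod .count]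
      cocycleSkewAction α β (g * h) := by
  filter_upwards [Measure.quasiMeasurePreserving_fst.ae (hα g h),
    Measure.quasiMeasurePreserving_fst.ae (hβ g h)] with y hαy hβy
  simp only [cocycleSkewAction, comp_apply, hαy, hβy, mul_smul, mul_inv_rev, mul_assoc]

theorem cocycleSkewAction_one_ae_eq [SFinite μ] {α β : Γ → X → Λ} (hα : IsCocycle μ α)
    (hβ : IsCocycle μ β) : cocycleSkewAction α β 1 =ᵐ[μ.prod .count] id := by
  filter_upwards [Measure.quasiMeasurePreserving_fst.ae hα.ae_one,
    Measure.quasiMeasurePreserving_fst.ae hβ.ae_one] with y hαy hβy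
  simp [cocycleSkewAction, hαy, hβy]

variable [DiscreteMeasurableSpace Λ]

theorem measurePreserving_cocycleSkewAction [SFinite μ] [Countable Λ] {α β : Γ → X → Λ} {g : Γ}
    (hg : MeasurePreserving (g • ·) μ μ) (hα : Measurable (α g)) (hβ : Measurable (β g)) :
    MeasurePreserving (cocycleSkewAction α β g) (μ.prod .count) (μ.prod .count) := by
  have hfib : Measurable (uncurry fun x (l : Λ) => α g x * l * (β g x)⁻¹) :=
    (measurable_of_countable fun q : Λ × Λ × Λ => q.1 * q.2.1 * q.2.2⁻¹).comp
      ((hα.comp measurable_fst).prodMk (measurable_snd.prodMk (hβ.comp measurable_fst)))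
  refine hg.skew_product hfib (ae_of_all _ fun x => ?_)
  exact Measure.map_count_equiv ((Equiv.mulLeft _).trans (Equiv.mulRight _))
    (measurable_of_countable _)

end SkewProduct

section CocycleKoopman

variable {X : Type*} [MeasurableSpace X] (μ : Measure X) (Λ : Type*) [Group Λ] [MeasurableSpace Λ]
  [MeasurableSingletonClass Λ] [Countable Λ]

theorem measure_univ_prod_one [SFinite μ] :
    μ.prod (.count : Measure Λ) (Set.univ ×ˢ {1}) = μ .univ := by
  rw [Measure.prod_prod, Measure.count_singleton, mul_one]

noncomputable def indicatorUnivProdOne [IsFiniteMeasure μ] :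
    Lp ℂ 2 (μ.prod (.count : Measure Λ)) :=
  indicatorConstLp 2 (MeasurableSet.univ.prod (measurableSet_singleton 1))
    (by rw [measure_univ_prod_one]; exact measure_ne_top _ _) 1

theorem coeFn_indicatorUnivProdOne [IsFiniteMeasure μ] :
    ⇑(indicatorUnivProdOne μ Λ) =ᵐ[μ.prod .count]
      fun y => ({1} : Set Λ).indicator (fun _ => (1 : ℂ)) y.2 :=
  indicatorConstLp_coeFn.trans (ae_of_all _ fun y => by
    by_cases hy : y.2 = 1 <;> simp [Set.indicator, hy])

theorem norm_indicatorUnivProdOne [IsProbabilityMeasure μ] : ‖indicatorUnivProdOne μ Λ‖ = 1 := by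
  rw [indicatorUnivProdOne, norm_indicatorConstLp two_ne_zero ENNReal.ofNat_ne_top,
    measureReal_def, measure_univ_prod_one]
  simp

variable {Γ : Type*} [Group Γ] [MulAction Γ X] {μ Λ} [IsProbabilityMeasure μ] {α β : Γ → X → Λ}
  (hT : ∀ g, MeasurePreserving (cocycleSkewAction α β g) (μ.prod .count) (μ.prod .count))
  (hmul : ∀ g h, cocycleSkewAction α β g ∘ cocycleSkewAction α β h =ᵐ[μ.prod .count]
    cocycleSkewAction α β (g * h))
  (hone : cocycleSkewAction α β 1 =ᵐ[μ.prod .count] id)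

theorem norm_sub_koopman_indicatorUnivProdOne_sq (g : Γ) :
    ‖indicatorUnivProdOne μ Λ - Lp.koopman ℂ hT hmul hone g (indicatorUnivProdOne μ Λ)‖ ^ 2 =
      2 * μ.real {x | α g x ≠ β g x} := by
  have hs : MeasurableSet (Set.univ ×ˢ {(1 : Λ)} : Set (X × Λ)) :=
    MeasurableSet.univ.prod (measurableSet_singleton 1)
  rw [indicatorUnivProdOne,
    Lp.norm_sub_koopman_indicatorConstLp (p := 2) ℂ hT hmul hone ENNReal.ofNat_ne_top, norm_one,
    one_mul, measureReal_def,
    (hT g).measure_preimage_symmDiff hs (by rw [measure_univ_prod_one]; exact measure_ne_top _ _),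
    sdiff_preimage_cocycleSkewAction, Measure.prod_prod, Measure.count_singleton, mul_one,
    ENNReal.toReal_ofNat, ← Real.sqrt_eq_rpow, Real.sq_sqrt ENNReal.toReal_nonneg,
    ENNReal.toReal_mul, ENNReal.toReal_ofNat, measureReal_def]

theorem norm_sub_koopman_indicatorUnivProdOne_lt {g : Γ} (hα : Measurable (α g))
    (hβ : Measurable (β g)) {ε : ℝ} (hε : 0 < ε)
    (hclose : ENNReal.ofReal (1 - ε ^ 2 / 2) < μ {x | α g x = β g x}) :
    ‖indicatorUnivProdOne μ Λ - Lp.koopman ℂ hT hmul hone g (indicatorUnivProdOne μ Λ)‖ < ε := by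
  have hmeas : MeasurableSet {x | α g x = β g x} := measurableSet_eq_fun hα hβ
  have hreal : 1 - ε ^ 2 / 2 < μ.real {x | α g x = β g x} := by
    have h := (ENNReal.toReal_lt_toReal ENNReal.ofReal_ne_top (measure_ne_top _ _)).mpr hclose
    rw [ENNReal.toReal_ofReal'] at h
    exact (le_max_left _ _).trans_lt h
  have hcompl : μ.real {x | α g x ≠ β g x} = 1 - μ.real {x | α g x = β g x} := by
    rw [← probReal_compl_eq_one_sub hmeas]; rfl
  refine lt_of_pow_lt_pow_left₀ 2 hε.le ?_
  rw [norm_sub_koopman_indicatorUnivProdOne_sq, hcompl]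
  linarith

theorem exists_measurable_fiberwise_invariant_near_indicator {w : Lp ℂ 2 (μ.prod .count)}
    (hw : ∀ g, Lp.koopman ℂ hT hmul hone g w = w)
    (hvw : ‖indicatorUnivProdOne μ Λ - w‖ < 1 / 4) :
    ∃ W : X → Λ → ℂ, (∀ l, Measurable fun x => W x l) ∧
      (∀ g, ∀ᵐ x ∂μ, ∀ l, W (g • x) (α g x * l * (β g x)⁻¹) = W x l) ∧
      ∫⁻ x, ∑' l, ‖({1} : Set Λ).indicator (fun _ => (1 : ℂ)) l - W x l‖ₑ ^ 2 ∂μ < 16⁻¹ := by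
  set W := (Lp.aestronglyMeasurable w).mk w
  have hW : ⇑w =ᵐ[μ.prod .count] W := (Lp.aestronglyMeasurable w).ae_eq_mk
  refine ⟨curry W, fun l => (Lp.aestronglyMeasurable w).stronglyMeasurable_mk.measurable.comp
    (measurable_id.prodMk measurable_const), fun g => ?_, ?_⟩
  · exact ae_forall_of_ae_prod_count (((hT g).quasiMeasurePreserving.ae_eq hW).symm.trans
      ((Lp.comp_ae_eq_of_koopman_eq ℂ hT hmul hone hw g).trans hW))
  · have hv : ⇑(indicatorUnivProdOne μ Λ - w) =ᵐ[μ.prod .count]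
        fun y => ({1} : Set Λ).indicator (fun _ => (1 : ℂ)) y.2 - W y := by
      filter_upwards [Lp.coeFn_sub (indicatorUnivProdOne μ Λ) w, coeFn_indicatorUnivProdOne μ Λ,
        hW] with y hsub hv hw
      rw [hsub, Pi.sub_apply, hv, hw]
    refine (lintegral_tsum_enorm_sq_eq (indicatorUnivProdOne μ Λ - w) hv).trans_lt ?_
    calc ‖indicatorUnivProdOne μ Λ - w‖ₑ ^ 2 < 4⁻¹ ^ 2 := by
          gcongr
          rw [← ofReal_norm, ← ENNReal.ofReal_ofNat 4, ← ENNReal.ofReal_inv_of_pos four_pos,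
            ← one_div]
          exact ENNReal.ofReal_lt_ofReal_iff'.mpr ⟨hvw, by norm_num⟩
      _ = 16⁻¹ := by rw [← ENNReal.inv_pow]; norm_num

end CocycleKoopman

section Rigidity

variable {Γ X Λ : Type*} [Group Γ] [MulAction Γ X] [MeasurableSpace X] {μ : Measure X}
  [Group Λ] [Countable Λ] [MeasurableSpace Λ] [MeasurableSingletonClass Λ]

theorem exists_conj_of_fiberwise_invariant [ErgodicSMul Γ X μ] [IsProbabilityMeasure μ]
    {E : Type*} [NormedAddCommGroup E] [MeasurableSpace E] [BorelSpace E] {c : E}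
    (hc : ‖c‖ₑ = 1) {α β : Γ → X → Λ} {W : X → Λ → E} (hW : ∀ l, Measurable fun x => W x l)
    (hinv : ∀ g, ∀ᵐ x ∂μ, ∀ l, W (g • x) (α g x * l * (β g x)⁻¹) = W x l)
    (hclose : ∫⁻ x, ∑' l, ‖({1} : Set Λ).indicator (fun _ => c) l - W x l‖ₑ ^ 2 ∂μ < 16⁻¹) :
    ∃ f : X → Λ, Measurable f ∧
      (∀ g : Γ, ∀ᵐ x ∂μ, β g x = (f (g • x))⁻¹ * α g x * f x) ∧
      ENNReal.ofReal (3 / 4) < μ {x | f x = 1} := by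
  set S : Λ → Set X := fun l => {x | IsDominant (W x) l}
  have hS : ∀ l, MeasurableSet (S l) := measurableSet_isDominant hW
  obtain ⟨f, hf, hfS⟩ := exists_measurable_eq_of_pairwise_disjoint hS
    (fun _ _ hij => Set.disjoint_left.mpr fun _ hi hj => hij (hi.eq hj)) 1
  have hS1 : ENNReal.ofReal (3 / 4) < μ (S 1) :=
    three_quarters_lt_measure_isDominant hc hW 1 hclose
  set e : Γ → X → Λ ≃ Λ := fun g x => (Equiv.mulLeft (α g x)).trans (Equiv.mulRight (β g x)⁻¹)
  have htrans : ∀ g, ∀ᵐ x ∂μ, ∀ l, x ∈ S l ↔ g • x ∈ S (e g x l) := by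
    intro g
    filter_upwards [hinv g] with x hx l
    have hcomp : W x = W (g • x) ∘ e g x := funext fun l => (hx l).symm
    change IsDominant (W x) l ↔ IsDominant (W (g • x)) (e g x l)
    rw [hcomp, isDominant_comp_equiv]
  have hcover : ∀ᵐ x ∂μ, x ∈ ⋃ l, S l := by
    refine ae_mem_of_forall_preimage_smul_ae_eq (G := Γ)
      (MeasurableSet.iUnion hS).nullMeasurableSet (fun g => ?_)
      (ne_zero_of_lt (hS1.trans_le (measure_mono (Set.subset_iUnion S 1))))
    filter_upwards [htrans g] with x hx
    change (g • x ∈ ⋃ l, S l) = (x ∈ ⋃ l, S l)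
    rw [eq_iff_iff, Set.mem_iUnion, Set.mem_iUnion, (e g x).surjective.exists]
    exact exists_congr fun l => (hx l).symm
  refine ⟨f, hf, fun g => ?_, hS1.trans_le (measure_mono fun x hx => hfS 1 x hx)⟩
  filter_upwards [htrans g, hcover] with x hx hxS
  obtain ⟨l, hl⟩ := Set.mem_iUnion.mp hxS
  rw [hfS _ _ ((hx l).mp hl), hfS l x hl]
  simp only [e, Equiv.trans_apply, Equiv.coe_mulLeft, Equiv.coe_mulRight]
  group

end Rigidity

/-- **Local rigidity of cocycles for Kazhdan groups (after Hjorth / Popa).**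
Let `Γ` be a countable group with Kazhdan constants `(K, ε)`: for every unitary
`Γ`-representation with a `(K, ε)`-almost invariant unit vector there is an
invariant unit vector `w` with `‖v − w‖ < 1/4`.  Let `Γ ↷ (X, μ)` be an ergodic
p.m.p. action, `Λ` a countable group, and `α, β : Γ × X → Λ` measurable cocycles with
`μ {x : α(g,x) = β(g,x)} > 1 − ε²/2` for every `g ∈ K`.  Then `β = α^f` for some
measurable `f : X → Λ`, and moreover `μ {x : f x = e} > 3/4`. -/
theorem local_rigidity_of_cocycles
    {Γ : Type} [Group Γ] [Countable Γ]
    (K : Set Γ) (ε : ℝ) (hε : 0 < ε)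
    -- `(K, ε)` are Kazhdan constants for `Γ`:
    (hKazhdan : ∀ (H : Type) (_ : NormedAddCommGroup H) (_ : InnerProductSpace ℂ H)
      (_ : CompleteSpace H) (π : Γ →* (H ≃ₗᵢ[ℂ] H)) (v : H), ‖v‖ = 1 →
      (∀ g ∈ K, ‖v - π g v‖ < ε) →
      ∃ w : H, ‖w‖ = 1 ∧ (∀ g : Γ, π g w = w) ∧ ‖v - w‖ < 1/4)
    {X : Type} [MeasurableSpace X] (μ : Measure X) [IsProbabilityMeasure μ]
    [MulAction Γ X]
    (hmp : ∀ g : Γ, MeasurePreserving (fun x : X => g • x) μ μ)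
    (herg : ∀ S : Set X, MeasurableSet S →
      (∀ g : Γ, (fun x : X => g • x) ⁻¹' S = S) → μ S = 0 ∨ μ S = 1)
    {Λ : Type} [Group Λ] [Countable Λ] [MeasurableSpace Λ] [DiscreteMeasurableSpace Λ]
    (α β : Γ → X → Λ)
    (hαmeas : ∀ g, Measurable (α g)) (hβmeas : ∀ g, Measurable (β g))
    (hαcoc : ∀ g₂ g₁ : Γ, ∀ᵐ x ∂μ, α (g₂ * g₁) x = α g₂ (g₁ • x) * α g₁ x)
    (hβcoc : ∀ g₂ g₁ : Γ, ∀ᵐ x ∂μ, β (g₂ * g₁) x = β g₂ (g₁ • x) * β g₁ x)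
    (hclose : ∀ g ∈ K, ENNReal.ofReal (1 - ε ^ 2 / 2) < μ {x | α g x = β g x}) :
    ∃ f : X → Λ, Measurable f ∧
      (∀ g : Γ, ∀ᵐ x ∂μ, β g x = (f (g • x))⁻¹ * α g x * f x) ∧
      ENNReal.ofReal (3 / 4) < μ {x | f x = 1} := by
  have hT := fun g => measurePreserving_cocycleSkewAction (hmp g) (hαmeas g) (hβmeas g)
  have hmul := cocycleSkewAction_comp_ae_eq hαcoc hβcoc
  have hone := cocycleSkewAction_one_ae_eq hαcoc hβcoc
  obtain ⟨w, -, hw, hvw⟩ := hKazhdan (Lp ℂ 2 (μ.prod .count)) inferInstance inferInstance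
    inferInstance (Lp.koopman ℂ hT hmul hone) (indicatorUnivProdOne μ Λ)
    (norm_indicatorUnivProdOne μ Λ)
    fun g hg => norm_sub_koopman_indicatorUnivProdOne_lt hT hmul hone (hαmeas g) (hβmeas g) hε
      (hclose g hg)
  obtain ⟨W, hW, hW_inv, hW_close⟩ :=
    exists_measurable_fiberwise_invariant_near_indicator hT hmul hone hw hvw
  have := ErgodicSMul.of_forall_preimage_smul_eq hmp herg
  exact exists_conj_of_fiberwise_invariant (by simp) hW hW_inv hW_close
end

section
/- Let K be a compact second countable group with Haar probability measure m_K, Γ ↷ K an action by left translations through a dense homomorphism τ : Γ → K, Λ a group, and c : Γ × K → Λ a cocycle. For t ∈ K define the deformed cocycle c_t(g, x) = c(g, x t⁻¹). Suppose for t, s with t, s, ts in some subset U ⊆ K there exist measurable maps f_t, f_s, f_{ts} : K → Λ with c_r = c^{f_r} (i.e., c_r(g,x) = f_r(gx) c(g,x) f_r(x)⁻¹) for r ∈ {t, s, ts}, each satisfying m_K{x : f_r(x) = e} > 3/4, and Γ ↷ (K, m_K) is ergodic. Then the conjugating maps satisfy the cocycle equation f_{ts}(x) = f_t(x s⁻¹)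 f_s(x) for a.e. x ∈ K. -/
open MeasureTheory
open scoped ENNReal

/-!
Put `F x = f_{ts}(x)⁻¹ f_t(x s⁻¹) f_s(x)`. Composing the three cohomology relations gives
`F(gx) = c(g,x) F(x) c(g,x)⁻¹` a.e., so the set `{F = 1}` is a.e. `Γ`-invariant. Each of the
three sets `{f_{ts} = 1}`, `{f_t(· s⁻¹) = 1}`, `{f_s = 1}` has measure `> 3/4` (right
invariance of `m_K`), hence their intersection, which lies in `{F = 1}`, has positive
measure. By ergodicity `{F = 1}` is conull.
-/

theorem inv_mul_mul_eq_conj_of_eq_mul_mul_inv {Λ : Type*} [Group Λ]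
    {b u v α₁ α₂ β₁ β₂ γ₁ γ₂ : Λ} (hu : u = α₁ * b * α₂⁻¹) (hv : v = β₁ * u * β₂⁻¹)
    (hv' : v = γ₁ * b * γ₂⁻¹) :
    γ₁⁻¹ * (β₁ * α₁) = b * (γ₂⁻¹ * (β₂ * α₂)) * b⁻¹ := by
  have hγ₁ : γ₁ = v * γ₂ * b⁻¹ := by rw [hv']; group
  rw [hγ₁, hv, hu]
  group

theorem measure_inter_inter_ne_zero_of_three_quarters_lt {X : Type*} [MeasurableSpace X]
    {μ : Measure X} [IsProbabilityMeasure μ] {A B C : Set X}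
    (hA : MeasurableSet A) (hB : MeasurableSet B) (hC : MeasurableSet C)
    (hμA : 3 / 4 < μ A) (hμB : 3 / 4 < μ B) (hμC : 3 / 4 < μ C) :
    μ (A ∩ B ∩ C) ≠ 0 := by
  have hquarter : (1 : ℝ≥0∞) - 3 / 4 = 1 / 4 := by
    refine ENNReal.sub_eq_of_eq_add (by finiteness) ?_
    rw [ENNReal.div_add_div_same, show (1 : ℝ≥0∞) + 3 = 4 by norm_num,
      ENNReal.div_self (by norm_num) (by norm_num)]
  have hcompl {D : Set X} (hD : MeasurableSet D) (hμD : 3 / 4 < μ D) : μ Dᶜ < 1 / 4 :=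
    hquarter ▸ prob_compl_lt_one_sub_of_lt_prob hμD hD
  intro h0
  have hlt : μ (A ∩ B ∩ C)ᶜ < 3 / 4 :=
    calc μ (A ∩ B ∩ C)ᶜ ≤ μ Aᶜ + μ Bᶜ + μ Cᶜ := by
          rw [Set.compl_inter, Set.compl_inter]
          exact (measure_union_le _ _).trans (add_le_add (measure_union_le _ _) le_rfl)
      _ < 1 / 4 + 1 / 4 + 1 / 4 := by gcongr <;> exact hcompl ‹_› ‹_›
      _ = 3 / 4 := by rw [ENNReal.div_add_div_same, ENNReal.div_add_div_same]; norm_num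
  rw [(prob_compl_eq_one_iff ((hA.inter hB).inter hC)).2 h0] at hlt
  exact lt_asymm hlt (by rw [ENNReal.div_lt_iff] <;> norm_num)

section Ergodic

variable {Γ X : Type*} [Group Γ] [MulAction Γ X]

theorem preimage_smul_iInter_preimage_smul (A : Set X) (h : Γ) :
    (h • ·) ⁻¹' ⋂ g : Γ, (g • ·) ⁻¹' A = ⋂ g : Γ, (g • ·) ⁻¹' A := by
  ext x
  simp only [Set.mem_preimage, Set.mem_iInter, smul_smul]
  exact (Equiv.mulRight h).forall_congr fun _ => Iff.rfl

variable [Countable Γ] [MeasurableSpace X] [MeasurableConstSMul Γ X]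
  {μ : Measure X} [IsProbabilityMeasure μ]

theorem ae_mem_of_ae_smul_mem_iff
    (herg : ∀ S : Set X, MeasurableSet S → (∀ g : Γ, (g • ·) ⁻¹' S = S) → μ S = 0 ∨ μ S = 1)
    {A : Set X} (hA : MeasurableSet A) (hμA : μ A ≠ 0)
    (hinv : ∀ g : Γ, ∀ᵐ x ∂μ, (g • x ∈ A ↔ x ∈ A)) :
    ∀ᵐ x ∂μ, x ∈ A := by
  set S := ⋂ g : Γ, (g • ·) ⁻¹' A
  have hS : MeasurableSet S := .iInter fun g => measurable_const_smul g hA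
  have hSA : S =ᵐ[μ] A := by
    filter_upwards [ae_all_iff.2 hinv] with x hx
    have hxS : x ∈ S ↔ ∀ g : Γ, g • x ∈ A := by simp only [S, Set.mem_iInter, Set.mem_preimage]
    exact propext (hxS.trans ⟨fun h => one_smul Γ x ▸ h 1, fun h g => (hx g).2 h⟩)
  have hμS : μ S = 1 := (herg S hS (preimage_smul_iInter_preimage_smul A)).resolve_left
    (by rwa [measure_congr hSA])
  exact (mem_ae_iff_prob_eq_one hA).2 (by rw [← measure_congr hSA, hμS])

end Ergodic

theorem deformed_cocycle_conjugators_cocycle_eq_general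
    {Γ : Type*} [Group Γ] [Countable Γ]
    {K : Type*} [Group K] [TopologicalSpace K] [IsTopologicalGroup K]
    [MeasurableSpace K] [BorelSpace K]
    (μ : Measure K) [IsProbabilityMeasure μ]
    [μ.IsMulRightInvariant]
    (τ : Γ →* K)
    (herg : ∀ S : Set K, MeasurableSet S →
      (∀ g : Γ, (fun x : K => τ g * x) ⁻¹' S = S) → μ S = 0 ∨ μ S = 1)
    {Λ : Type*} [Group Λ] [Countable Λ] [MeasurableSpace Λ] [DiscreteMeasurableSpace Λ]
    (c : Γ → K → Λ)
    (t s : K) (ft fs fts : K → Λ)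
    (hftmeas : Measurable ft) (hfsmeas : Measurable fs) (hftsmeas : Measurable fts)
    (hft : ∀ g : Γ, ∀ᵐ x ∂μ, c g (x * t⁻¹) = ft (τ g * x) * c g x * (ft x)⁻¹)
    (hfs : ∀ g : Γ, ∀ᵐ x ∂μ, c g (x * s⁻¹) = fs (τ g * x) * c g x * (fs x)⁻¹)
    (hfts : ∀ g : Γ, ∀ᵐ x ∂μ,
      c g (x * (t * s)⁻¹) = fts (τ g * x) * c g x * (fts x)⁻¹)
    (hft34 : (3 / 4 : ℝ≥0∞) < μ {x | ft x = 1})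
    (hfs34 : (3 / 4 : ℝ≥0∞) < μ {x | fs x = 1})
    (hfts34 : (3 / 4 : ℝ≥0∞) < μ {x | fts x = 1}) :
    ∀ᵐ x ∂μ, fts x = ft (x * s⁻¹) * fs x := by
  set F : K → Λ := fun x => (fts x)⁻¹ * (ft (x * s⁻¹) * fs x)
  have hconj (g : Γ) : ∀ᵐ x ∂μ, F (τ g * x) = c g x * F x * (c g x)⁻¹ := by
    filter_upwards [hfs g, (measurePreserving_mul_right μ s⁻¹).quasiMeasurePreserving.ae (hft g),
      hfts g] with x hs ht hts
    rw [← mul_assoc] at ht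
    rw [mul_inv_rev, ← mul_assoc] at hts
    exact inv_mul_mul_eq_conj_of_eq_mul_mul_inv hs ht hts
  have hft_shift_meas : Measurable fun x => ft (x * s⁻¹) :=
    hftmeas.comp (measurable_mul_const s⁻¹)
  have hft_shift34 : 3 / 4 < μ {x | ft (x * s⁻¹) = 1} := by
    change 3 / 4 < μ ((· * s⁻¹) ⁻¹' {x | ft x = 1})
    rwa [measure_preimage_mul_right]
  have hsub : {x | fts x = 1} ∩ {x | ft (x * s⁻¹) = 1} ∩ {x | fs x = 1} ⊆ {x | F x = 1} := by
    rintro x ⟨⟨hts, ht⟩, hs⟩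
    simp_all [F]
  have hFpos : μ {x | F x = 1} ≠ 0 := fun h0 =>
    measure_inter_inter_ne_zero_of_three_quarters_lt (hftsmeas (.singleton 1))
      (hft_shift_meas (.singleton 1)) (hfsmeas (.singleton 1)) hfts34 hft_shift34 hfs34
      (measure_mono_null hsub h0)
  let _ : MulAction Γ K := MulAction.compHom K τ
  have : MeasurableConstSMul Γ K := ⟨fun g => measurable_const_mul (τ g)⟩
  have hF_ae := ae_mem_of_ae_smul_mem_iff herg
    ((hftsmeas.inv.mul (hft_shift_meas.mul hfsmeas)) (.singleton 1)) hFpos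
    fun g => (hconj g).mono fun x hx => by
      change F (τ g * x) = 1 ↔ F x = 1
      rw [hx, conj_eq_one_iff]
  filter_upwards [hF_ae] with x hx
  exact inv_mul_eq_one.mp hx

/-- **The conjugating maps of deformed cocycles satisfy the cocycle equation
(deformation/rigidity step in the proof of cocycle superrigidity for isometric
actions).**  Let `K` be a compact second countable group with Haar probability measure
`m_K`, `Γ ↷ K` by left translation via a dense homomorphism `τ : Γ → K` which is an
ergodic action, `Λ` a countable group, and `c : Γ × K → Λ` a cocycle.  For `t ∈ K` let
`c_t (g, x) = c (g, x t⁻¹)` be the deformed cocycle.  Suppose for `t`, `s` and `ts`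
there are measurable maps `f_t, f_s, f_{ts} : K → Λ` with `c_r = c^{f_r}`, i.e.
`c_r (g, x) = f_r (gx) · c(g,x) · f_r(x)⁻¹` a.e., and `m_K {x : f_r x = e} > 3/4` for
each `r ∈ {t, s, ts}`.  Then `f_{ts}(x) = f_t(x s⁻¹) · f_s(x)` for a.e. `x ∈ K`. -/
theorem deformed_cocycle_conjugators_cocycle_eq
    {Γ : Type*} [Group Γ] [Countable Γ]
    {K : Type*} [Group K] [TopologicalSpace K] [IsTopologicalGroup K]
    [CompactSpace K] [SecondCountableTopology K] [MeasurableSpace K] [BorelSpace K]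
    (μ : Measure K) [IsProbabilityMeasure μ]
    [μ.IsMulLeftInvariant] [μ.IsMulRightInvariant]
    (τ : Γ →* K) (hτdense : DenseRange τ)
    (herg : ∀ S : Set K, MeasurableSet S →
      (∀ g : Γ, (fun x : K => τ g * x) ⁻¹' S = S) → μ S = 0 ∨ μ S = 1)
    {Λ : Type*} [Group Λ] [Countable Λ] [MeasurableSpace Λ] [DiscreteMeasurableSpace Λ]
    (c : Γ → K → Λ) (hcmeas : ∀ g, Measurable (c g))
    (hcoc : ∀ g₂ g₁ : Γ, ∀ᵐ x ∂μ, c (g₂ * g₁) x = c g₂ (τ g₁ * x) * c g₁ x)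
    (t s : K) (ft fs fts : K → Λ)
    (hftmeas : Measurable ft) (hfsmeas : Measurable fs) (hftsmeas : Measurable fts)
    (hft : ∀ g : Γ, ∀ᵐ x ∂μ, c g (x * t⁻¹) = ft (τ g * x) * c g x * (ft x)⁻¹)
    (hfs : ∀ g : Γ, ∀ᵐ x ∂μ, c g (x * s⁻¹) = fs (τ g * x) * c g x * (fs x)⁻¹)
    (hfts : ∀ g : Γ, ∀ᵐ x ∂μ,
      c g (x * (t * s)⁻¹) = fts (τ g * x) * c g x * (fts x)⁻¹)
    (hft34 : (3 / 4 : ℝ≥0∞) < μ {x | ft x = 1})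
    (hfs34 : (3 / 4 : ℝ≥0∞) < μ {x | fs x = 1})
    (hfts34 : (3 / 4 : ℝ≥0∞) < μ {x | fts x = 1}) :
    ∀ᵐ x ∂μ, fts x = ft (x * s⁻¹) * fs x :=
  deformed_cocycle_conjugators_cocycle_eq_general μ τ herg c t s ft fs fts hftmeas hfsmeas hftsmeas
    hft hfs hfts hft34 hfs34 hfts34
end
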